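/- In the setting of the AdiaConvert construction, for every x ∈ 𝕏, s ∈ [0,1] and ε ∈ (0,1], the state |ψ_x^+(s,ε)⟩ is an eigenvector of H_x(s,ε) = Λ(s,ε) − Π_x with eigenvalue 0, i.e. H_x(s,ε)|ψ_x^+(s,ε)⟩ = 0. -/

import Mathlib

noncomputable section
open scoped ComplexConjugate

namespace AdiaConvert

/-- Index type of the Hilbert space `H = H_O ⊕ (ℂⁿ ⊗ ℂ^{Σ∪{0̄}} ⊗ H_W)`, where
`H_O = ℂ² ⊗ H'`, `H' = ℂ^V`, `H_W = ℂ^W`, and the blank symbol `0̄` is `Option.none`. -/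
abbrev Idx (Al V W : Type*) (n : ℕ) : Type _ := (Fin 2 × V) ⊕ (Fin n × Option Al × W)

/-- The Hilbert space of the AdiaConvert algorithm. -/
abbrev Hsp (Al V W : Type*) (n : ℕ) : Type _ := EuclideanSpace ℂ (Idx Al V W n)

/-- Build a vector of `Hsp` from its coordinates. -/
def mk {Al V W : Type*} {n : ℕ} (f : Idx Al V W n → ℂ) : Hsp Al V W n :=
  (WithLp.equiv 2 _).symm f

variable {Al V W X : Type*} {n : ℕ}

/-- `θ(s) = πs/2`. -/
def θ (s : ℝ) : ℝ := Real.pi * s / 2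

/-- `ξ(s) = 2 cos θ(s) sin θ(s)`. -/
def ξ (s : ℝ) : ℝ := 2 * Real.cos (θ s) * Real.sin (θ s)

/-- The coordinates of `|y⁺⟩ = (|0̄⟩ + |y⟩)/√2`. -/
def gP [DecidableEq Al] (y : Al) : Option Al → ℂ := fun a =>
  if a = none then (Real.sqrt 2 : ℂ)⁻¹ else if a = some y then (Real.sqrt 2 : ℂ)⁻¹ else 0

/-- The coordinates of `|y⁻⟩ = (|0̄⟩ - |y⟩)/√2`. -/
def gM [DecidableEq Al] (y : Al) : Option Al → ℂ := fun a =>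
  if a = none then (Real.sqrt 2 : ℂ)⁻¹ else if a = some y then -(Real.sqrt 2 : ℂ)⁻¹ else 0

/-- `|k_x⁺(s)⟩ = cos θ(s) |0,ρ_x⟩ + sin θ(s) |1,σ_x⟩` (embedded in `H`). -/
def kP (ρv σv : X → EuclideanSpace ℂ V) (s : ℝ) (x : X) : Hsp Al V W n :=
  mk fun q => match q with
  | .inl (b, i) => if b = 0 then (Real.cos (θ s) : ℂ) * ρv x i
                   else (Real.sin (θ s) : ℂ) * σv x i
  | .inr _ => 0

/-- `|k_x⁻(s)⟩ = -sin θ(s) |0,ρ_x⟩ + cos θ(s) |1,σ_x⟩` (embedded in `H`). -/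
def kM (ρv σv : X → EuclideanSpace ℂ V) (s : ℝ) (x : X) : Hsp Al V W n :=
  mk fun q => match q with
  | .inl (b, i) => if b = 0 then -(Real.sin (θ s) : ℂ) * ρv x i
                   else (Real.cos (θ s) : ℂ) * σv x i
  | .inr _ => 0

/-- `∑ᵢ |i⟩ ⊗ |x_i^±⟩ ⊗ |c_{x,i}⟩` (embedded in `H`), where the `ℂ^{Σ∪{0̄}}` part has
coordinates `g (x_i)`. -/
def qPart (g : Al → Option Al → ℂ) (inp : X → Fin n → Al)
    (c : X → Fin n → EuclideanSpace ℂ W) (x : X) : Hsp Al V W n :=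
  mk fun q => match q with
  | .inl _ => 0
  | .inr (i, a, w) => g (inp x i) a * c x i w

/-- The non-normalized state `|Ψ_x⁺(s,ε)⟩`. -/
def PsiP [DecidableEq Al] (ρv σv : X → EuclideanSpace ℂ V) (inp : X → Fin n → Al)
    (u : X → Fin n → EuclideanSpace ℂ W) (Wr s ε : ℝ) (x : X) : Hsp Al V W n :=
  kP ρv σv s x + ((ε / Real.sqrt Wr : ℝ) : ℂ) • qPart gP inp u x

/-- The non-normalized state `|Ψ_x⁻(s,ε)⟩`. -/
def PsiM [DecidableEq Al] (ρv σv : X → EuclideanSpace ℂ V) (inp : X → Fin n → Al)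
    (v : X → Fin n → EuclideanSpace ℂ W) (Wr s ε : ℝ) (x : X) : Hsp Al V W n :=
  kM ρv σv s x + ((ξ s * (Real.sqrt Wr / ε) : ℝ) : ℂ) • qPart gM inp v x

/-- The normalized state `|ψ_x⁺(s,ε)⟩`. -/
def psiP [Fintype Al] [Fintype V] [Fintype W] [DecidableEq Al] (ρv σv : X → EuclideanSpace ℂ V) (inp : X → Fin n → Al)
    (u : X → Fin n → EuclideanSpace ℂ W) (Wr s ε : ℝ) (x : X) : Hsp Al V W n :=
  ‖PsiP ρv σv inp u Wr s ε x‖⁻¹ • PsiP ρv σv inp u Wr s ε x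

/-- The rank-one operator `|a⟩⟨b| : v ↦ ⟨b|v⟩·a`. -/
def ketbra [Fintype Al] [Fintype V] [Fintype W]
    (a b : Hsp Al V W n) : Hsp Al V W n →L[ℂ] Hsp Al V W n :=
  (innerSL ℂ b).smulRight a

/-- The orthogonal projection `Λ(s,ε)` onto `span{|Ψ_x⁻(s,ε)⟩ : x ∈ 𝕏}`. -/
def Lam [Fintype Al] [Fintype V] [Fintype W] [DecidableEq Al]
    (ρv σv : X → EuclideanSpace ℂ V) (inp : X → Fin n → Al)
    (v : X → Fin n → EuclideanSpace ℂ W) (Wr s ε : ℝ) :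
    Hsp Al V W n →L[ℂ] Hsp Al V W n :=
  (Submodule.span ℂ (Set.range fun x : X => PsiM ρv σv inp v Wr s ε x)).subtypeL.comp
    (Submodule.orthogonalProjectionOnto
      (Submodule.span ℂ (Set.range fun x : X => PsiM ρv σv inp v Wr s ε x)))

/-- The matrix of the oracle Hamiltonian `Π_x = ∑ᵢ |i⟩⟨i| ⊗ |x_i⁻⟩⟨x_i⁻| ⊗ I_W`
(acting as `0` on `H_O`). -/
def PiMat [DecidableEq Al] [DecidableEq W] (inp : X → Fin n → Al) (x : X) :
    Matrix (Idx Al V W n) (Idx Al V W n) ℂ :=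
  fun q q' => match q, q' with
  | .inr (i, a, w), .inr (i', a', w') =>
      if i = i' ∧ w = w' then gM (inp x i) a * conj (gM (inp x i) a') else 0
  | _, _ => 0

/-- The oracle Hamiltonian `Π_x` as an operator on `H`. -/
def PiC [Fintype Al] [Fintype V] [Fintype W]
    [DecidableEq Al] [DecidableEq V] [DecidableEq W]
    (inp : X → Fin n → Al) (x : X) : Hsp Al V W n →L[ℂ] Hsp Al V W n :=
  Matrix.toEuclideanCLM (𝕜 := ℂ) (PiMat inp x)

/-- The total Hamiltonian `H_x(s,ε) = Λ(s,ε) − Π_x`. -/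
def Hx [Fintype Al] [Fintype V] [Fintype W]
    [DecidableEq Al] [DecidableEq V] [DecidableEq W]
    (ρv σv : X → EuclideanSpace ℂ V) (inp : X → Fin n → Al)
    (v : X → Fin n → EuclideanSpace ℂ W) (Wr s ε : ℝ) (x : X) :
    Hsp Al V W n →L[ℂ] Hsp Al V W n :=
  Lam ρv σv inp v Wr s ε - PiC inp x

/-- The projection `P_x(s,ε) = |ψ_x⁺(s,ε)⟩⟨ψ_x⁺(s,ε)|`. -/
def Pproj [Fintype Al] [Fintype V] [Fintype W] [DecidableEq Al]
    (ρv σv : X → EuclideanSpace ℂ V) (inp : X → Fin n → Al)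
    (u : X → Fin n → EuclideanSpace ℂ W) (Wr s ε : ℝ) (x : X) :
    Hsp Al V W n →L[ℂ] Hsp Al V W n :=
  ketbra (psiP ρv σv inp u Wr s ε x) (psiP ρv σv inp u Wr s ε x)

/-- The operator `X_x(s,ε) = (π/(2N_x(ε))) |Ψ_x⁻(s,ε)⟩⟨ψ_x⁺(s,ε)|`. -/
def Xx [Fintype Al] [Fintype V] [Fintype W] [DecidableEq Al]
    (ρv σv : X → EuclideanSpace ℂ V) (inp : X → Fin n → Al)
    (u v : X → Fin n → EuclideanSpace ℂ W) (Wr s ε : ℝ) (x : X) :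
    Hsp Al V W n →L[ℂ] Hsp Al V W n :=
  ((Real.pi / (2 * ‖PsiP ρv σv inp u Wr s ε x‖) : ℝ) : ℂ) •
    ketbra (PsiM ρv σv inp v Wr s ε x) (psiP ρv σv inp u Wr s ε x)

end AdiaConvert

/-!
Both terms of `H_x` annihilate `Ψ_x⁺`. `Π_x` does because `⟨x_i⁻|x_i⁺⟩ = 0`. `Λ` does because
`Ψ_x⁺` is orthogonal to every `Ψ_y⁻`: the cross terms have disjoint supports, the scalings
`ε/√W` and `ξ√W/ε` cancel, and `⟨y_i⁻|x_i⁺⟩ = [x_i ≠ y_i]/2` gives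
`⟨Ψ_y⁻|Ψ_x⁺⟩ = sin θ cos θ (⟨σ_y|σ_x⟩ - ⟨ρ_y|ρ_x⟩) + (ξ/2) ∑_{x_i ≠ y_i} ⟨v_{y,i}|u_{x,i}⟩`,
which vanishes by the adversary relation since `ξ = 2 sin θ cos θ`.
-/

theorem Submodule.mem_orthogonal_span_range_iff {𝕜 E ι : Type*} [RCLike 𝕜] [NormedAddCommGroup E]
    [InnerProductSpace 𝕜 E] {f : ι → E} {z : E} :
    z ∈ (span 𝕜 (Set.range f))ᗮ ↔ ∀ i, inner 𝕜 (f i) z = 0 := by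
  refine ⟨fun h i => inner_right_of_mem_orthogonal (subset_span (Set.mem_range_self i)) h,
    fun h => ?_⟩
  have hspan : span 𝕜 (Set.range f) ≤ (𝕜 ∙ z)ᗮ := span_le.mpr <|
    Set.range_subset_iff.mpr fun i => mem_orthogonal_singleton_iff_inner_left.mpr (h i)
  exact orthogonal_le hspan (le_orthogonal_orthogonal _ (mem_span_singleton_self z))

namespace AdiaConvert

variable {Al V W X : Type*} {n : ℕ}

lemma mk_apply (f : Idx Al V W n → ℂ) (q : Idx Al V W n) : mk f q = f q := rfl

section Inner

variable [Fintype Al] [Fintype V] [Fintype W]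

lemma inner_kM_kP (ρv σv : X → EuclideanSpace ℂ V) (s : ℝ) (x y : X) :
    inner ℂ (kM (Al := Al) (W := W) (n := n) ρv σv s y) (kP ρv σv s x) =
      Real.sin (θ s) * Real.cos (θ s) * (inner ℂ (σv y) (σv x) - inner ℂ (ρv y) (ρv x)) := by
  simp only [PiLp.inner_apply, RCLike.inner_apply', Fintype.sum_sum_type, Fintype.sum_prod_type,
    Fin.sum_univ_two, kM, kP, mk_apply, if_pos, one_ne_zero, if_false, mul_zero,
    Finset.sum_const_zero, add_zero, map_mul, map_neg, Complex.conj_ofReal, mul_sub,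
    Finset.mul_sum, ← Finset.sum_sub_distrib, ← Finset.sum_add_distrib]
  exact Finset.sum_congr rfl fun _ _ => by ring

lemma inner_kM_qPart (ρv σv : X → EuclideanSpace ℂ V) (s : ℝ) (g : Al → Option Al → ℂ)
    (inp : X → Fin n → Al) (c : X → Fin n → EuclideanSpace ℂ W) (x y : X) :
    inner ℂ (kM ρv σv s y) (qPart g inp c x) = 0 := by
  simp [PiLp.inner_apply, kM, qPart, mk_apply]

lemma inner_qPart_kP (ρv σv : X → EuclideanSpace ℂ V) (s : ℝ) (g : Al → Option Al → ℂ)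
    (inp : X → Fin n → Al) (c : X → Fin n → EuclideanSpace ℂ W) (x y : X) :
    inner ℂ (qPart g inp c y) (kP ρv σv s x) = 0 := by
  simp [PiLp.inner_apply, kP, qPart, mk_apply]

lemma inner_qPart_qPart (g g' : Al → Option Al → ℂ) (inp : X → Fin n → Al)
    (c c' : X → Fin n → EuclideanSpace ℂ W) (x y : X) :
    inner ℂ (qPart (V := V) g inp c y) (qPart g' inp c' x) =
      ∑ i, (∑ a, conj (g (inp y i) a) * g' (inp x i) a) * inner ℂ (c y i) (c' x i) := by
  simp only [PiLp.inner_apply, RCLike.inner_apply', Fintype.sum_sum_type, Fintype.sum_prod_type,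
    qPart, mk_apply, mul_zero, Finset.sum_const_zero, zero_add, Finset.sum_mul, Finset.mul_sum,
    map_mul]
  refine Finset.sum_congr rfl fun _ _ => ?_
  rw [Finset.sum_comm]
  exact Finset.sum_congr rfl fun _ _ => Finset.sum_congr rfl fun _ _ => by ring

end Inner

section Adversary

variable [Fintype Al] [DecidableEq Al]

lemma sum_conj_gM_mul_gP (b c : Al) :
    ∑ a, conj (gM b a) * gP c a = if c = b then 0 else 2⁻¹ := by
  have hsq : ((Real.sqrt 2 : ℂ))⁻¹ * (Real.sqrt 2 : ℂ)⁻¹ = 2⁻¹ := by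
    rw [← mul_inv, ← Complex.ofReal_mul, Real.mul_self_sqrt zero_le_two, Complex.ofReal_ofNat]
  rw [Fintype.sum_option]
  split_ifs with h
  · subst h
    simp [gM, gP, hsq]
  · simp [gM, gP, hsq, h]

lemma sum_conj_gM_mul_gP_mul_eq_half_sum_filter (inp : X → Fin n → Al) (f : Fin n → ℂ) (x y : X) :
    ∑ i, (∑ a, conj (gM (inp y i) a) * gP (inp x i) a) * f i =
      2⁻¹ * ∑ i ∈ Finset.univ.filter (fun i => inp x i ≠ inp y i), f i := by
  simp only [sum_conj_gM_mul_gP, Finset.sum_filter, Finset.mul_sum, ite_mul, zero_mul, mul_ite,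
    mul_zero, ite_not]

variable [Fintype V] [Fintype W]

lemma inner_PsiM_PsiP (ρv σv : X → EuclideanSpace ℂ V) (inp : X → Fin n → Al)
    (u v : X → Fin n → EuclideanSpace ℂ W) {Wr ε : ℝ} (hW : 0 < Wr) (hε : ε ≠ 0) (s : ℝ)
    {x y : X}
    (hadv : inner ℂ (ρv x) (ρv y) - inner ℂ (σv x) (σv y) =
      ∑ i ∈ Finset.univ.filter (fun i => inp x i ≠ inp y i), inner ℂ (u x i) (v y i)) :
    inner ℂ (PsiM ρv σv inp v Wr s ε y) (PsiP ρv σv inp u Wr s ε x) = 0 := by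
  have hadv' : inner ℂ (ρv y) (ρv x) - inner ℂ (σv y) (σv x) =
      ∑ i ∈ Finset.univ.filter (fun i => inp x i ≠ inp y i), inner ℂ (v y i) (u x i) := by
    simpa only [map_sub, map_sum, inner_conj_symm] using congrArg conj hadv
  have hcoef : ((ξ s * (Real.sqrt Wr / ε) : ℝ) : ℂ) * ((ε / Real.sqrt Wr : ℝ) : ℂ) =
      2 * Real.cos (θ s) * Real.sin (θ s) := by
    have : Real.sqrt Wr ≠ 0 := (Real.sqrt_pos.mpr hW).ne'
    rw [← Complex.ofReal_mul, ξ]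
    field_simp
    push_cast
    ring
  simp only [PsiM, PsiP, inner_add_left, inner_add_right, inner_smul_left, inner_smul_right]
  rw [inner_kM_kP, inner_kM_qPart, inner_qPart_kP, inner_qPart_qPart,
    sum_conj_gM_mul_gP_mul_eq_half_sum_filter, ← hadv', Complex.conj_ofReal]
  linear_combination hcoef * (2⁻¹ * (inner ℂ (ρv y) (ρv x) - inner ℂ (σv y) (σv x)))

lemma Lam_apply_eq_zero (ρv σv : X → EuclideanSpace ℂ V) (inp : X → Fin n → Al)
    (v : X → Fin n → EuclideanSpace ℂ W) (Wr s ε : ℝ) {z : Hsp Al V W n}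
    (hz : ∀ y, inner ℂ (PsiM ρv σv inp v Wr s ε y) z = 0) :
    Lam ρv σv inp v Wr s ε z = 0 := by
  rw [Lam, ContinuousLinearMap.comp_apply,
    Submodule.orthogonalProjectionOnto_eq_zero_iff.mpr
      (Submodule.mem_orthogonal_span_range_iff.mpr hz), map_zero]

variable [DecidableEq V] [DecidableEq W]

lemma PiC_apply_inl (inp : X → Fin n → Al) (x : X) (f : Hsp Al V W n) (p : Fin 2 × V) :
    PiC inp x f (.inl p) = 0 := by
  simp [PiC, Matrix.mulVec, dotProduct, PiMat]

lemma PiC_apply_inr (inp : X → Fin n → Al) (x : X) (f : Hsp Al V W n) (i : Fin n)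
    (a : Option Al) (w : W) :
    PiC inp x f (.inr (i, a, w)) =
      gM (inp x i) a * ∑ a', conj (gM (inp x i) a') * f (.inr (i, a', w)) := by
  simp [PiC, Matrix.mulVec, dotProduct, PiMat, Fintype.sum_sum_type, Fintype.sum_prod_type,
    ite_and, Finset.mul_sum, mul_add, mul_assoc]

lemma PiC_kP (ρv σv : X → EuclideanSpace ℂ V) (inp : X → Fin n → Al) (s : ℝ) (x : X) :
    PiC inp x (kP (W := W) ρv σv s x) = 0 := by
  ext (p | ⟨i, a, w⟩)
  · exact PiC_apply_inl ..
  · simp [PiC_apply_inr, kP, mk_apply]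

lemma PiC_qPart_gP (inp : X → Fin n → Al) (c : X → Fin n → EuclideanSpace ℂ W) (x : X) :
    PiC inp x (qPart (V := V) gP inp c x) = 0 := by
  ext (p | ⟨i, a, w⟩)
  · exact PiC_apply_inl ..
  · simp only [PiC_apply_inr, qPart, mk_apply, ← mul_assoc, ← Finset.sum_mul, sum_conj_gM_mul_gP,
      if_pos, zero_mul, mul_zero]
    rfl

lemma PiC_PsiP (ρv σv : X → EuclideanSpace ℂ V) (inp : X → Fin n → Al)
    (u : X → Fin n → EuclideanSpace ℂ W) (Wr s ε : ℝ) (x : X) :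
    PiC inp x (PsiP ρv σv inp u Wr s ε x) = 0 := by
  rw [PsiP, map_add, map_smul, PiC_kP, PiC_qPart_gP, smul_zero, add_zero]

end Adversary

end AdiaConvert

open AdiaConvert

theorem stmt14_general
    {Al V W : Type*} [Fintype Al] [DecidableEq Al] [Fintype V] [DecidableEq V]
    [Fintype W] [DecidableEq W]
    {n : ℕ} {X : Type*} (inp : X → Fin n → Al)
    (ρv σv : X → EuclideanSpace ℂ V)
    (Wr : ℝ) (hW : 0 < Wr)
    (u v : X → Fin n → EuclideanSpace ℂ W)
    (hadv : ∀ x y : X,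
      (inner ℂ (ρv x) (ρv y) : ℂ) - (inner ℂ (σv x) (σv y) : ℂ) =
        ∑ i ∈ Finset.univ.filter (fun i => inp x i ≠ inp y i),
          (inner ℂ (u x i) (v y i) : ℂ))
    (ε : ℝ) (hε0 : 0 < ε) :
    ∀ x : X, ∀ s ∈ Set.Icc (0:ℝ) 1,
      Hx ρv σv inp v Wr s ε x (psiP ρv σv inp u Wr s ε x) = 0 := by
  intro x s _
  have hLam : Lam ρv σv inp v Wr s ε (PsiP ρv σv inp u Wr s ε x) = 0 :=
    Lam_apply_eq_zero ρv σv inp v Wr s ε fun y =>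
      inner_PsiM_PsiP ρv σv inp u v hW hε0.ne' s (hadv x y)
  rw [psiP, ContinuousLinearMap.map_smul_of_tower, Hx, sub_apply, hLam, PiC_PsiP, sub_zero,
    smul_zero]

/-- `|ψ_x⁺(s,ε)⟩` is an eigenvector of `H_x(s,ε) = Λ(s,ε) − Π_x` with
eigenvalue `0`. -/
theorem stmt14
    {Al V W : Type*} [Fintype Al] [DecidableEq Al] [Fintype V] [DecidableEq V]
    [Fintype W] [DecidableEq W]
    {n : ℕ} {X : Type*} [Fintype X] (inp : X → Fin n → Al)
    (ρv σv : X → EuclideanSpace ℂ V)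
    (hρ : ∀ x, ‖ρv x‖ = 1) (hσ : ∀ x, ‖σv x‖ = 1)
    (Wr : ℝ) (hW : 0 < Wr)
    (u v : X → Fin n → EuclideanSpace ℂ W)
    (hu : ∀ x, ∑ i, ‖u x i‖ ^ 2 ≤ Wr) (hv : ∀ x, ∑ i, ‖v x i‖ ^ 2 ≤ Wr)
    (hadv : ∀ x y : X,
      (inner ℂ (ρv x) (ρv y) : ℂ) - (inner ℂ (σv x) (σv y) : ℂ) =
        ∑ i ∈ Finset.univ.filter (fun i => inp x i ≠ inp y i),
          (inner ℂ (u x i) (v y i) : ℂ))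
    (ε : ℝ) (hε0 : 0 < ε) (hε1 : ε ≤ 1) :
    ∀ x : X, ∀ s ∈ Set.Icc (0:ℝ) 1,
      Hx ρv σv inp v Wr s ε x (psiP ρv σv inp u Wr s ε x) = 0 :=
  stmt14_general inp ρv σv Wr hW u v hadv ε hε0
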